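/- arXiv:2010.00658 — 6 statements merged into one kernel-verified Lean document; each statement's English description precedes it below -/
import Mathlib

section
/- For any finite graph H with no isolated vertices and any maximum fractional matching (w_e) of H, there exists a minimum fractional edge cover (w'_e) of H such that w_e ≤ w'_e for every edge e. -/
/-!
Fractional Gallai identity. Routing the deficiency `1 - w(∂v)` of every vertex of a fractional
matching `w` to some edge at `v` gives a fractional edge cover `w' ≥ w` of total `|V| - |w|`.
Conversely, a fractional edge cover `c` scaled on each edge `uv` by `min (1/c(∂u)) (1/c(∂v))` is
a fractional matching of total at least `|V| - |c|`, since `1/c(∂u) + 1/c(∂v) ≤ 1 + min (…)`.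
Hence `|V| - ν_f ≤ |c|` for every fractional edge cover `c`, so `w'` is minimum when `w` is
maximum.
-/

open Finset

variable {V : Type*}

/-- Sum of edge weights over all edges containing vertex `v`. -/
def vertexDegSum [Fintype V] [DecidableEq V] (w : Sym2 V → ℝ) (v : V) : ℝ :=
  ∑ e ∈ Finset.univ.filter (fun e : Sym2 V => v ∈ e), w e

/-- Total weight of an edge weighting. -/
def edgeTotal [Fintype V] [DecidableEq V] (w : Sym2 V → ℝ) : ℝ :=
  ∑ e : Sym2 V, w e

/-- A fractional matching of `G`. -/
def IsFracMatching [Fintype V] [DecidableEq V] (G : SimpleGraph V) (w : Sym2 V → ℝ) : Prop :=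
  (∀ e, 0 ≤ w e) ∧ (∀ e, e ∉ G.edgeSet → w e = 0) ∧ ∀ v, vertexDegSum w v ≤ 1

/-- A fractional edge cover of `G`. -/
def IsFracEdgeCover [Fintype V] [DecidableEq V] (G : SimpleGraph V) (w : Sym2 V → ℝ) : Prop :=
  (∀ e, 0 ≤ w e) ∧ (∀ e, e ∉ G.edgeSet → w e = 0) ∧ ∀ v, 1 ≤ vertexDegSum w v

/-- A maximum fractional matching. -/
def IsMaxFracMatching [Fintype V] [DecidableEq V] (G : SimpleGraph V) (w : Sym2 V → ℝ) : Prop :=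
  IsFracMatching G w ∧ ∀ w', IsFracMatching G w' → edgeTotal w' ≤ edgeTotal w

/-- A minimum fractional edge cover. -/
def IsMinFracEdgeCover [Fintype V] [DecidableEq V] (G : SimpleGraph V) (w : Sym2 V → ℝ) : Prop :=
  IsFracEdgeCover G w ∧ ∀ w', IsFracEdgeCover G w' → edgeTotal w ≤ edgeTotal w'

/-- A fractional vertex cover of `G`. -/
def IsFracCover (G : SimpleGraph V) (c : V → ℝ) : Prop :=
  (∀ v, 0 ≤ c v) ∧ ∀ u v, G.Adj u v → 1 ≤ c u + c v

/-- Total weight of a vertex weighting. -/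
def coverTotal [Fintype V] (c : V → ℝ) : ℝ := ∑ v, c v

/-- A minimum fractional vertex cover. -/
def IsMinFracCover [Fintype V] (G : SimpleGraph V) (c : V → ℝ) : Prop :=
  IsFracCover G c ∧ ∀ c', IsFracCover G c' → coverTotal c ≤ coverTotal c'

/-- An edge is bad if it has weight 1 in every maximum fractional matching. -/
def IsBadEdge [Fintype V] [DecidableEq V] (G : SimpleGraph V) (e : Sym2 V) : Prop :=
  ∀ w, IsMaxFracMatching G w → w e = 1

section
variable [Fintype V] [DecidableEq V]

lemma sum_mul_vertexDegSum (a : V → ℝ) (w : Sym2 V → ℝ) :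
    ∑ v, a v * vertexDegSum w v = ∑ e, w e * ∑ v ∈ e.toFinset, a v := by
  simp_rw [vertexDegSum, mul_sum, sum_filter]
  rw [sum_comm]
  refine sum_congr rfl fun e _ => ?_
  rw [← sum_filter]
  exact sum_congr (by ext; simp [Sym2.mem_toFinset]) fun v _ => mul_comm _ _

lemma sum_vertexDegSum_eq_two_mul_edgeTotal {G : SimpleGraph V} {w : Sym2 V → ℝ}
    (hw : ∀ e, e ∉ G.edgeSet → w e = 0) :
    ∑ v, vertexDegSum w v = 2 * edgeTotal w := by
  have handshake := sum_mul_vertexDegSum (fun _ => 1) w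
  simp only [one_mul, sum_const, nsmul_eq_mul, mul_one] at handshake
  rw [handshake, edgeTotal, mul_sum]
  refine sum_congr rfl fun e _ => ?_
  by_cases he : e ∈ G.edgeSet
  · rw [Sym2.card_toFinset_of_not_isDiag e (G.not_isDiag_of_mem_edgeSet he)]
    push_cast
    ring
  · simp [hw e he]

end

lemma Sym2.inf_map_le {α β : Type*} [SemilatticeInf β] (f : α → β) {e : Sym2 α} {a : α}
    (ha : a ∈ e) : (e.map f).inf ≤ f a := by
  induction e with
  | _ x y => rcases Sym2.mem_iff.1 ha with rfl | rfl <;> simp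

lemma Sym2.le_inf_map {α β : Type*} [SemilatticeInf β] (f : α → β) {b : β}
    (hb : ∀ a, b ≤ f a) (e : Sym2 α) : b ≤ (e.map f).inf := by
  induction e with
  | _ x y => exact le_inf (hb x) (hb y)

lemma Sym2.sum_toFinset_le_one_add_inf_map {α : Type*} [DecidableEq α] (f : α → ℝ)
    (hf : ∀ a, f a ≤ 1) (e : Sym2 α) : ∑ a ∈ e.toFinset, f a ≤ 1 + (e.map f).inf := by
  induction e with
  | _ x y =>
    rcases eq_or_ne x y with rfl | hxy
    · simp [Sym2.toFinset_mk_eq]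
    · rw [Sym2.toFinset_mk_eq, sum_pair hxy, Sym2.map_mk, Sym2.inf_mk]
      linarith [min_add_max (f x) (f y), max_le (hf x) (hf y)]

section
variable [Fintype V] [DecidableEq V] {G : SimpleGraph V}

noncomputable def matchingOfCover (c : Sym2 V → ℝ) (e : Sym2 V) : ℝ :=
  c e * (e.map fun v => (vertexDegSum c v)⁻¹).inf

lemma isFracMatching_matchingOfCover {c : Sym2 V → ℝ} (hc : IsFracEdgeCover G c) :
    IsFracMatching G (matchingOfCover c) := by
  obtain ⟨hc_nonneg, hc_supp, hc_deg⟩ := hc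
  have hdeg_pos v : 0 < vertexDegSum c v := one_pos.trans_le (hc_deg v)
  refine ⟨fun e => mul_nonneg (hc_nonneg e)
      (Sym2.le_inf_map _ (fun v => (inv_pos.2 (hdeg_pos v)).le) e),
    fun e he => by simp [matchingOfCover, hc_supp e he], fun v => ?_⟩
  calc vertexDegSum (matchingOfCover c) v
      ≤ ∑ e ∈ univ.filter (v ∈ ·), c e * (vertexDegSum c v)⁻¹ := by
        refine sum_le_sum fun e he => mul_le_mul_of_nonneg_left ?_ (hc_nonneg e)
        exact Sym2.inf_map_le _ (mem_filter.1 he).2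
    _ = 1 := by rw [← sum_mul, ← vertexDegSum, mul_inv_cancel₀ (hdeg_pos v).ne']

lemma card_le_edgeTotal_add_edgeTotal_matchingOfCover {c : Sym2 V → ℝ}
    (hc : IsFracEdgeCover G c) :
    (Fintype.card V : ℝ) ≤ edgeTotal c + edgeTotal (matchingOfCover c) := by
  obtain ⟨hc_nonneg, -, hc_deg⟩ := hc
  calc (Fintype.card V : ℝ)
      = ∑ v, (vertexDegSum c v)⁻¹ * vertexDegSum c v := by
        simp [inv_mul_cancel₀ (one_pos.trans_le (hc_deg _)).ne']
    _ = ∑ e, c e * ∑ v ∈ e.toFinset, (vertexDegSum c v)⁻¹ := sum_mul_vertexDegSum _ _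
    _ ≤ ∑ e, c e * (1 + (e.map fun v => (vertexDegSum c v)⁻¹).inf) := by
        refine sum_le_sum fun e _ => mul_le_mul_of_nonneg_left ?_ (hc_nonneg e)
        exact Sym2.sum_toFinset_le_one_add_inf_map _
          (fun v => inv_le_one_of_one_le₀ (hc_deg v)) e
    _ = edgeTotal c + edgeTotal (matchingOfCover c) := by
        simp only [mul_add, mul_one, sum_add_distrib, edgeTotal, matchingOfCover]

def deficiencyAt (w : Sym2 V → ℝ) (f : V → Sym2 V) (e : Sym2 V) : ℝ :=
  ∑ v ∈ univ.filter (f · = e), (1 - vertexDegSum w v)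

variable {w : Sym2 V → ℝ} {f : V → Sym2 V}

lemma deficiencyAt_nonneg (hw : ∀ v, vertexDegSum w v ≤ 1) (e : Sym2 V) :
    0 ≤ deficiencyAt w f e :=
  sum_nonneg fun v _ => sub_nonneg.2 (hw v)

lemma le_deficiencyAt (hw : ∀ v, vertexDegSum w v ≤ 1) (v : V) :
    1 - vertexDegSum w v ≤ deficiencyAt w f (f v) :=
  single_le_sum (f := fun u => 1 - vertexDegSum w u) (fun u _ => sub_nonneg.2 (hw u))
    (mem_filter.2 ⟨mem_univ v, rfl⟩)

lemma deficiencyAt_eq_zero (hf : ∀ v, f v ∈ G.edgeSet) {e : Sym2 V} (he : e ∉ G.edgeSet) :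
    deficiencyAt w f e = 0 :=
  sum_eq_zero fun v hv => absurd ((mem_filter.1 hv).2 ▸ hf v) he

lemma edgeTotal_deficiencyAt :
    edgeTotal (deficiencyAt w f) = ∑ v, (1 - vertexDegSum w v) :=
  sum_fiberwise univ f _

lemma isFracEdgeCover_add_deficiencyAt (hw : IsFracMatching G w) (hf_mem : ∀ v, v ∈ f v)
    (hf_edge : ∀ v, f v ∈ G.edgeSet) : IsFracEdgeCover G (w + deficiencyAt w f) := by
  obtain ⟨hw_nonneg, hw_supp, hw_deg⟩ := hw
  refine ⟨fun e => add_nonneg (hw_nonneg e) (deficiencyAt_nonneg hw_deg e),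
    fun e he => by simp [hw_supp e he, deficiencyAt_eq_zero hf_edge he], fun v => ?_⟩
  have hcover : deficiencyAt w f (f v) ≤ vertexDegSum (deficiencyAt w f) v :=
    single_le_sum (fun e _ => deficiencyAt_nonneg hw_deg e)
      (mem_filter.2 ⟨mem_univ _, hf_mem v⟩)
  have hadd : vertexDegSum (w + deficiencyAt w f) v
      = vertexDegSum w v + vertexDegSum (deficiencyAt w f) v := sum_add_distrib
  linarith [le_deficiencyAt (f := f) hw_deg v]

lemma edgeTotal_add_deficiencyAt (hw : ∀ e, e ∉ G.edgeSet → w e = 0) :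
    edgeTotal (w + deficiencyAt w f) = Fintype.card V - edgeTotal w := by
  have hadd : edgeTotal (w + deficiencyAt w f) = edgeTotal w + edgeTotal (deficiencyAt w f) :=
    sum_add_distrib
  rw [hadd, edgeTotal_deficiencyAt, sum_sub_distrib, sum_vertexDegSum_eq_two_mul_edgeTotal hw]
  simp only [sum_const, card_univ, nsmul_eq_mul, mul_one]
  ring

end

/-- For any maximum fractional matching there is a minimum fractional edge cover
dominating it edgewise. -/
theorem exists_min_edge_cover_dominating_max_matching
    [Fintype V] [DecidableEq V] (G : SimpleGraph V)
    (hiso : ∀ v : V, ∃ u, G.Adj v u)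
    (w : Sym2 V → ℝ) (hw : IsMaxFracMatching G w) :
    ∃ w' : Sym2 V → ℝ, IsMinFracEdgeCover G w' ∧ ∀ e, w e ≤ w' e := by
  have hedge v : ∃ e ∈ G.edgeSet, v ∈ e :=
    let ⟨u, hu⟩ := hiso v
    ⟨s(v, u), hu, Sym2.mem_mk_left v u⟩
  choose f hf_edge hf_mem using hedge
  refine ⟨w + deficiencyAt w f, ⟨isFracEdgeCover_add_deficiencyAt hw.1 hf_mem hf_edge,
    fun c hc => ?_⟩, fun e => le_add_of_nonneg_right (deficiencyAt_nonneg hw.1.2.2 e)⟩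
  have hcard := card_le_edgeTotal_add_edgeTotal_matchingOfCover hc
  have hmax := hw.2 _ (isFracMatching_matchingOfCover hc)
  rw [edgeTotal_add_deficiencyAt hw.1.2.1]
  linarith
end

section
/- Let H be a finite graph, let A ⊆ V(H) be a subset for which there exists a minimum fractional vertex cover (c_v) with c_v = 1 for all v ∈ A and c_v ∈ {0, 1/2} for v ∉ A. Let E_1 be the set of edges of H with exactly one endpoint in A, and E_0 the set of edges with no endpoint in A. Then for any maximum fractional matching (w_e) of H: ∑_{e ∈ E_1} w_e = |A| and ∑_{e ∈ E_0} w_e = c(H) − |A|. -/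
/-!
Write `c` for the cover witnessing validity of `A`; it takes values in `{0, 1/2, 1}`. Minimality
of `c` forces Hall's condition for matching every vertex `v` with `c v ≠ 0` injectively to a
neighbour `g v` with `c v + c (g v) = 1`, and putting weight `c v` on each edge `v (g v)` gives a
fractional matching of weight `∑ c`. So every maximum fractional matching `w` has weight `c(H)`,
and complementary slackness says that `w` saturates every vertex of `A` and vanishes on edges
inside `A`. Counting the weight of `w` at the vertices of `A` gives the sum over `E₁`; the sum
over `E₀` is what remains.
-/

open Finset

variable {V : Type*}

lemma sum_ite_apply_eq_le_of_injective {ι α M : Type*} [Fintype ι] [DecidableEq α]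
    [AddCommMonoid M] [LE M] {f : ι → α} (hf : Function.Injective f) (r : ι → M) (a : α)
    {b : M} (hb : 0 ≤ b) (hr : ∀ i, f i = a → r i ≤ b) :
    ∑ i, (if f i = a then r i else 0) ≤ b := by
  by_cases h : ∃ i, f i = a
  · obtain ⟨i, rfl⟩ := h
    rw [sum_eq_single i (fun j _ hj ↦ if_neg (hf.ne hj)) (by simp), if_pos rfl]
    exact hr i rfl
  · push Not at h
    rwa [sum_eq_zero fun i _ ↦ if_neg (h i)]

def IsHalfIntegral (c : V → ℝ) : Prop :=
  ∀ v, c v = 0 ∨ c v = 1 / 2 ∨ c v = 1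

section
variable [Fintype V] [DecidableEq V]

lemma sum_filter_mem_sym2_mk (c : V → ℝ) {u v : V} (h : u ≠ v) :
    ∑ x ∈ univ.filter (· ∈ s(u, v)), c x = c u + c v := by
  have : univ.filter (· ∈ s(u, v)) = {u, v} := by ext; simp
  rw [this, sum_pair h]

lemma sum_mul_sum_filter_mem (w : Sym2 V → ℝ) (c : V → ℝ) :
    ∑ e, w e * ∑ x ∈ univ.filter (· ∈ e), c x = ∑ v, c v * vertexDegSum w v := by
  simp only [vertexDegSum, sum_filter, mul_sum, mul_ite, mul_zero]
  rw [sum_comm]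
  simp only [mul_comm]

variable {G : SimpleGraph V} {w : Sym2 V → ℝ} {c : V → ℝ}

lemma IsFracMatching.le_mul_sum_filter_mem (hw : IsFracMatching G w) (hc : IsFracCover G c)
    (e : Sym2 V) : w e ≤ w e * ∑ x ∈ univ.filter (· ∈ e), c x := by
  by_cases he : e ∈ G.edgeSet
  · induction e using Sym2.ind with
    | _ u v =>
      rw [SimpleGraph.mem_edgeSet] at he
      rw [sum_filter_mem_sym2_mk c he.ne]
      nlinarith [hc.2 u v he, hw.1 s(u, v)]
  · simp [hw.2.1 e he]

lemma IsFracMatching.mul_vertexDegSum_le (hw : IsFracMatching G w) (hc : IsFracCover G c)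
    (v : V) : c v * vertexDegSum w v ≤ c v := by
  nlinarith [hc.1 v, hw.2.2 v]

lemma IsFracMatching.edgeTotal_le_coverTotal (hw : IsFracMatching G w) (hc : IsFracCover G c) :
    edgeTotal w ≤ coverTotal c :=
  calc edgeTotal w ≤ ∑ e, w e * ∑ x ∈ univ.filter (· ∈ e), c x :=
        sum_le_sum fun e _ ↦ hw.le_mul_sum_filter_mem hc e
    _ = ∑ v, c v * vertexDegSum w v := sum_mul_sum_filter_mem w c
    _ ≤ coverTotal c := sum_le_sum fun v _ ↦ hw.mul_vertexDegSum_le hc v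

lemma IsFracMatching.complementary_slackness (hw : IsFracMatching G w) (hc : IsFracCover G c)
    (h : edgeTotal w = coverTotal c) :
    (∀ u v, w s(u, v) ≠ 0 → c u + c v = 1) ∧ ∀ v, c v ≠ 0 → vertexDegSum w v = 1 := by
  have hedge := sum_le_sum fun e (_ : e ∈ univ) ↦ hw.le_mul_sum_filter_mem hc e
  have hvert := sum_le_sum fun v (_ : v ∈ univ) ↦ hw.mul_vertexDegSum_le hc v
  have hswap := sum_mul_sum_filter_mem w c
  rw [edgeTotal, coverTotal] at h
  constructor
  · intro u v hwuv
    have hadj : G.Adj u v := by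
      by_contra hne
      exact hwuv (hw.2.1 _ hne)
    have := (sum_eq_sum_iff_of_le fun e _ ↦ hw.le_mul_sum_filter_mem hc e).mp
      (by linarith) s(u, v) (mem_univ _)
    rw [sum_filter_mem_sym2_mk c hadj.ne] at this
    exact (mul_eq_left₀ hwuv).mp this.symm
  · intro v hv
    have := (sum_eq_sum_iff_of_le fun v _ ↦ hw.mul_vertexDegSum_le hc v).mp
      (by linarith) v (mem_univ _)
    exact (mul_eq_left₀ hv).mp this
end

section
variable [Fintype V] [DecidableEq V] {G : SimpleGraph V} {c : V → ℝ}

/-- Raise `c` by `1/4` on `N` and lower it by `1/4` on `S`: edges that are tight for `c` stay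
covered because `N` contains the tight neighbours of `S`, and all other edges have slack at least
`1/2` by half-integrality. Minimality of `c` then gives `#S ≤ #N`. -/
lemma IsMinFracCover.card_le_of_tight_neighbors_subset (hc : IsMinFracCover G c)
    (hhalf : IsHalfIntegral c) {S N : Finset V} (hS : ∀ v ∈ S, c v ≠ 0)
    (hN : ∀ x ∈ S, ∀ y, G.Adj x y → c x + c y = 1 → y ∈ N) : #S ≤ #N := by
  have hS_half : ∀ v ∈ S, 1 / 2 ≤ c v := fun v hv ↦ by
    rcases hhalf v with h | h | h
    exacts [absurd h (hS v hv), h.ge, by linarith]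
  set c' : V → ℝ := fun v ↦
    c v + (if v ∈ N then 1 / 4 else 0) - (if v ∈ S then 1 / 4 else 0)
  have hcover : IsFracCover G c' := by
    constructor
    · intro v
      simp only [c']
      split_ifs <;> first | linarith [hc.1.1 v] | linarith [hS_half v ‹v ∈ S›]
    · intro u v huv
      have := hc.1.2 u v huv
      by_cases htight : c u + c v = 1
      · have hv := fun hu ↦ hN u hu v huv htight
        have hu := fun hv ↦ hN v hv u huv.symm (by linarith)
        simp only [c']
        split_ifs <;> first | linarith | tauto
      · have : 3 / 2 ≤ c u + c v := by
          rcases hhalf u with h | h | h <;> rcases hhalf v with h' | h' | h' <;>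
            first | linarith | exact absurd (by linarith) htight
        simp only [c']
        split_ifs <;> linarith
  have htotal : coverTotal c' = coverTotal c + #N / 4 - #S / 4 := by
    simp only [coverTotal, c', sum_add_distrib, sum_sub_distrib, sum_ite_mem, univ_inter,
      sum_const, nsmul_eq_mul]
    ring
  have := hc.2 c' hcover
  exact_mod_cast (by linarith : (#S : ℝ) ≤ #N)

lemma IsMinFracCover.exists_injective_tight_neighbor (hc : IsMinFracCover G c)
    (hhalf : IsHalfIntegral c) :
    ∃ g : {v // c v ≠ 0} → V, Function.Injective g ∧
      ∀ v : {v // c v ≠ 0}, G.Adj v (g v) ∧ c v + c (g v) = 1 := by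
  classical
  set t : {v // c v ≠ 0} → Finset V := fun v ↦
    univ.filter fun y ↦ G.Adj v y ∧ c v + c y = 1
  have hhall : ∀ s : Finset {v // c v ≠ 0}, #s ≤ #(s.biUnion t) := fun s ↦ by
    have := hc.card_le_of_tight_neighbors_subset hhalf
      (S := s.map (Function.Embedding.subtype _)) (N := s.biUnion t)
      (fun x hx ↦ by
        obtain ⟨v, -, rfl⟩ := mem_map.mp hx
        exact v.2)
      (fun x hx y hxy h ↦ by
        obtain ⟨v, hv, rfl⟩ := mem_map.mp hx
        exact mem_biUnion.mpr ⟨v, hv, mem_filter.mpr ⟨mem_univ y, hxy, h⟩⟩)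
    rwa [card_map] at this
  obtain ⟨g, hg, hgt⟩ := (all_card_le_biUnion_card_iff_exists_injective t).mp hhall
  exact ⟨g, hg, fun v ↦ by simpa [t] using hgt v⟩
end

section
variable [Fintype V] [DecidableEq V]

lemma vertexDegSum_sum_ite {ι : Type*} [Fintype ι] (f : ι → Sym2 V) (r : ι → ℝ) (v : V) :
    vertexDegSum (fun e ↦ ∑ i, if f i = e then r i else 0) v =
      ∑ i, if v ∈ f i then r i else 0 := by
  rw [vertexDegSum, sum_comm]
  refine sum_congr rfl fun i _ ↦ ?_
  rw [sum_ite_eq]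
  simp

lemma edgeTotal_sum_ite {ι : Type*} [Fintype ι] (f : ι → Sym2 V) (r : ι → ℝ) :
    edgeTotal (fun e ↦ ∑ i, if f i = e then r i else 0) = ∑ i, r i := by
  rw [edgeTotal, sum_comm]
  simp

variable {G : SimpleGraph V} {c : V → ℝ}

/-- The matching puts weight `c v` on the edge `s(v, g v)`. A vertex `u` then receives at most
`c u` from its own edge and, by injectivity of `g`, at most `1 - c u` from the edge of its
preimage under `g`. -/
lemma exists_isFracMatching_edgeTotal_eq_coverTotal (hc0 : ∀ v, 0 ≤ c v)
    (hc1 : ∀ v, c v ≤ 1)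
    {g : {v // c v ≠ 0} → V} (hg : Function.Injective g)
    (hgc : ∀ v : {v // c v ≠ 0}, G.Adj v (g v) ∧ c v + c (g v) = 1) :
    ∃ w, IsFracMatching G w ∧ edgeTotal w = coverTotal c := by
  refine ⟨fun e ↦ ∑ v : {v // c v ≠ 0}, if s(↑v, g v) = e then c v else 0,
    ⟨?_, ?_, ?_⟩, ?_⟩
  · exact fun e ↦ sum_nonneg fun v _ ↦ by split_ifs <;> simp [hc0]
  · intro e he
    refine sum_eq_zero fun v _ ↦ if_neg ?_
    rintro rfl
    exact he (hgc v).1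
  · intro u
    have hsplit : ∀ v : {v // c v ≠ 0}, (if u ∈ s(↑v, g v) then c v else 0) =
        (if ↑v = u then c v else 0) + (if g v = u then c v else 0) := fun v ↦ by
      have hne := (hgc v).1.ne
      by_cases h1 : ↑v = u <;> by_cases h2 : g v = u <;> simp_all [eq_comm]
    rw [vertexDegSum_sum_ite, sum_congr rfl fun v _ ↦ hsplit v, sum_add_distrib]
    have h1 := sum_ite_apply_eq_le_of_injective Subtype.val_injective
      (fun v : {v // c v ≠ 0} ↦ c v) u (hc0 u) fun v hv ↦ by rw [hv]
    have h2 := sum_ite_apply_eq_le_of_injective hg (fun v ↦ c v) u (b := 1 - c u)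
      (by linarith [hc1 u]) fun v hv ↦ by rw [← hv]; linarith [(hgc v).2]
    linarith
  · rw [edgeTotal_sum_ite, coverTotal]
    classical
    exact (sum_subtype (univ.filter (c · ≠ 0)) (by simp) c).symm.trans (sum_filter_ne_zero _)

lemma IsMaxFracMatching.edgeTotal_eq_coverTotal {w : Sym2 V → ℝ} (hw : IsMaxFracMatching G w)
    (hc : IsMinFracCover G c) (hhalf : IsHalfIntegral c) : edgeTotal w = coverTotal c := by
  have hc1 : ∀ v, c v ≤ 1 := fun v ↦ by rcases hhalf v with h | h | h <;> rw [h] <;> norm_num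
  obtain ⟨g, hg, hgc⟩ := hc.exists_injective_tight_neighbor hhalf
  obtain ⟨w', hw', htotal⟩ := exists_isFracMatching_edgeTotal_eq_coverTotal hc.1.1 hc1 hg hgc
  exact le_antisymm (hw.1.edgeTotal_le_coverTotal hc.1) (htotal ▸ hw.2 w' hw')
end

section
variable [Fintype V] [DecidableEq V]

def numEndpointsIn (A : Finset V) (e : Sym2 V) : ℕ :=
  #(univ.filter fun v ↦ v ∈ e ∧ v ∈ A)

lemma numEndpointsIn_mk_le_one {A : Finset V} {u v : V} (h : u ∉ A ∨ v ∉ A) :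
    numEndpointsIn A s(u, v) ≤ 1 := by
  rw [numEndpointsIn, card_le_one]
  simp only [mem_filter, mem_univ, true_and, Sym2.mem_iff]
  grind

lemma sum_vertexDegSum_eq_sum_numEndpointsIn_mul (w : Sym2 V → ℝ) (A : Finset V) :
    ∑ v ∈ A, vertexDegSum w v = ∑ e, (numEndpointsIn A e : ℝ) * w e := by
  simp only [vertexDegSum]
  rw [sum_comm' (t' := univ) (s' := fun e ↦ univ.filter fun v ↦ v ∈ e ∧ v ∈ A)
    (by simp [and_comm])]
  simp [numEndpointsIn]

lemma sum_filter_numEndpointsIn (w : Sym2 V → ℝ) (A : Finset V)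
    (hw : ∀ e, w e ≠ 0 → numEndpointsIn A e ≤ 1) :
    ∑ e ∈ univ.filter (numEndpointsIn A · = 1), w e = ∑ v ∈ A, vertexDegSum w v ∧
      ∑ e ∈ univ.filter (numEndpointsIn A · = 0), w e =
        edgeTotal w - ∑ v ∈ A, vertexDegSum w v := by
  have hcases : ∀ e, w e ≠ 0 → numEndpointsIn A e = 0 ∨ numEndpointsIn A e = 1 :=
    fun e he ↦ Nat.le_one_iff_eq_zero_or_eq_one.mp (hw e he)
  have hone : ∀ e, (numEndpointsIn A e : ℝ) * w e = if numEndpointsIn A e = 1 then w e else 0 :=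
    fun e ↦ by
      by_cases he : w e = 0
      · simp [he]
      · rcases hcases e he with h | h <;> simp [h]
  have hsplit : ∀ e, w e = (if numEndpointsIn A e = 0 then w e else 0) +
      (if numEndpointsIn A e = 1 then w e else 0) := fun e ↦ by
    by_cases he : w e = 0
    · simp [he]
    · rcases hcases e he with h | h <;> simp [h]
  have hdeg :
      ∑ v ∈ A, vertexDegSum w v = ∑ e ∈ univ.filter (numEndpointsIn A · = 1), w e := by
    rw [sum_vertexDegSum_eq_sum_numEndpointsIn_mul, sum_filter]
    exact sum_congr rfl fun e _ ↦ hone e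
  have htotal : edgeTotal w = ∑ e ∈ univ.filter (numEndpointsIn A · = 0), w e +
      ∑ e ∈ univ.filter (numEndpointsIn A · = 1), w e := by
    rw [edgeTotal, sum_filter, sum_filter, ← sum_add_distrib]
    exact sum_congr rfl fun e _ ↦ hsplit e
  exact ⟨hdeg.symm, by linarith⟩
end

/-- For a valid subset A, any maximum fractional matching puts total weight |A| on
edges with exactly one endpoint in A and c(H) - |A| on edges with no endpoint in A. -/
theorem valid_subset_matching_weights
    [Fintype V] [DecidableEq V] (G : SimpleGraph V) (A : Finset V)
    (hA : ∃ c : V → ℝ, IsMinFracCover G c ∧ (∀ v ∈ A, c v = 1) ∧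
      (∀ v ∉ A, c v = 0 ∨ c v = 1/2))
    (w : Sym2 V → ℝ) (hw : IsMaxFracMatching G w)
    (c₀ : V → ℝ) (hc₀ : IsMinFracCover G c₀) :
    (∑ e ∈ Finset.univ.filter
        (fun e : Sym2 V => (Finset.univ.filter (fun v : V => v ∈ e ∧ v ∈ A)).card = 1),
      w e) = (A.card : ℝ) ∧
    (∑ e ∈ Finset.univ.filter
        (fun e : Sym2 V => (Finset.univ.filter (fun v : V => v ∈ e ∧ v ∈ A)).card = 0),
      w e) = coverTotal c₀ - (A.card : ℝ) := by
  obtain ⟨c, hc, hA1, hA0⟩ := hA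
  have hhalf : IsHalfIntegral c := fun v ↦
    if hv : v ∈ A then Or.inr (Or.inr (hA1 v hv)) else (hA0 v hv).imp_right Or.inl
  have htotal := hw.edgeTotal_eq_coverTotal hc hhalf
  obtain ⟨hedge, hvert⟩ := hw.1.complementary_slackness hc.1 htotal
  have hdeg : ∑ v ∈ A, vertexDegSum w v = #A := by
    rw [sum_congr rfl fun v hv ↦ hvert v (by simp [hA1 v hv]), sum_const, nsmul_one]
  have hsupp : ∀ e, w e ≠ 0 → numEndpointsIn A e ≤ 1 := by
    intro e he
    induction e using Sym2.ind with
    | _ u v =>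
      refine numEndpointsIn_mk_le_one (not_and_or.mp fun huv ↦ ?_)
      have := hedge u v he
      rw [hA1 u huv.1, hA1 v huv.2] at this
      norm_num at this
  obtain ⟨h1, h0⟩ := sum_filter_numEndpointsIn w A hsupp
  have hc₀c : coverTotal c₀ = coverTotal c := le_antisymm (hc₀.2 c hc.1) (hc.2 c₀ hc₀.1)
  exact ⟨h1.trans hdeg, h0.trans (by rw [hdeg, htotal, hc₀c])⟩
end

section
/- If H is a finite graph with minimum degree at least 2 and no bad edges, then there exist a maximum fractional matching (w_e) and a minimum fractional edge cover (w'_e) of H with w_e ≤ w'_e < 1 for every edge e. -/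
open Finset

variable {V : Type*}

section Helpers
variable [Fintype V] [DecidableEq V] {G : SimpleGraph V}

lemma vds_nonneg {w : Sym2 V → ℝ} (h : ∀ e, 0 ≤ w e) (v : V) : 0 ≤ vertexDegSum w v :=
  Finset.sum_nonneg fun e _ => h e

lemma edge_le_vds {w : Sym2 V → ℝ} (h : ∀ e, 0 ≤ w e) {v : V} {e : Sym2 V} (hv : v ∈ e) :
    w e ≤ vertexDegSum w v :=
  Finset.single_le_sum (fun f _ => h f) (by simp [hv])

lemma vds_add (w1 w2 : Sym2 V → ℝ) (v : V) :
    vertexDegSum (fun e => w1 e + w2 e) v = vertexDegSum w1 v + vertexDegSum w2 v :=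
  Finset.sum_add_distrib

lemma vds_sum {ι : Type*} (s : Finset ι) (F : ι → Sym2 V → ℝ) (v : V) :
    vertexDegSum (fun e => ∑ i ∈ s, F i e) v = ∑ i ∈ s, vertexDegSum (F i) v := by
  unfold vertexDegSum; rw [Finset.sum_comm]

lemma edgeTotal_sum {ι : Type*} (s : Finset ι) (F : ι → Sym2 V → ℝ) :
    edgeTotal (fun e => ∑ i ∈ s, F i e) = ∑ i ∈ s, edgeTotal (F i) := by
  unfold edgeTotal; rw [Finset.sum_comm]

lemma vds_single (E0 : Sym2 V) (c : ℝ) (x : V) :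
    vertexDegSum (fun e => if e = E0 then c else 0) x = if x ∈ E0 then c else 0 := by
  unfold vertexDegSum
  rw [Finset.sum_ite_eq' (Finset.univ.filter (fun e : Sym2 V => x ∈ e)) E0 (fun _ => c)]
  simp

lemma edgeTotal_single (E0 : Sym2 V) (c : ℝ) :
    edgeTotal (fun e => if e = E0 then c else 0) = c := by
  unfold edgeTotal
  rw [Finset.sum_ite_eq' Finset.univ E0 (fun _ => c)]
  simp

lemma edgeTotal_add (w1 w2 : Sym2 V → ℝ) :
    edgeTotal (fun e => w1 e + w2 e) = edgeTotal w1 + edgeTotal w2 :=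
  Finset.sum_add_distrib

lemma vds_smul (a : ℝ) (w : Sym2 V → ℝ) (v : V) :
    vertexDegSum (fun e => a * w e) v = a * vertexDegSum w v :=
  (Finset.mul_sum _ _ _).symm

lemma edgeTotal_smul (a : ℝ) (w : Sym2 V → ℝ) :
    edgeTotal (fun e => a * w e) = a * edgeTotal w :=
  (Finset.mul_sum _ _ _).symm

lemma filter_mem_sym2 {a b : V} (hab : a ≠ b) :
    Finset.univ.filter (fun v : V => v ∈ s(a, b)) = {a, b} := by
  ext v; simp [Sym2.mem_iff]

lemma diag_not_edge {e : Sym2 V} (h : e.IsDiag) : e ∉ G.edgeSet := by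
  induction e using Sym2.ind with
  | _ a b =>
    have hab : a = b := by simpa using h
    subst hab
    simp

lemma handshake {w : Sym2 V → ℝ} (hdiag : ∀ e : Sym2 V, e.IsDiag → w e = 0) :
    ∑ v : V, vertexDegSum w v = 2 * edgeTotal w := by
  unfold vertexDegSum edgeTotal
  rw [Finset.mul_sum]
  have : ∀ v : V, ∑ e ∈ Finset.univ.filter (fun e : Sym2 V => v ∈ e), w e
      = ∑ e : Sym2 V, if v ∈ e then w e else 0 := fun v => Finset.sum_filter _ _
  simp_rw [this]
  rw [Finset.sum_comm]
  refine Finset.sum_congr rfl fun e _ => ?_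
  induction e using Sym2.ind with
  | _ a b =>
    by_cases hab : a = b
    · subst hab
      simp [hdiag s(a,a) (by simp)]
    · rw [← Finset.sum_filter, filter_mem_sym2 hab, Finset.sum_pair hab]
      ring

lemma weight_le_one {w : Sym2 V → ℝ} (hw : IsFracMatching G w) (e : Sym2 V) : w e ≤ 1 := by
  induction e using Sym2.ind with
  | _ a b => exact le_trans (edge_le_vds hw.1 (Sym2.mem_mk_left a b)) (hw.2.2 a)

lemma exists_max_frac_matching (G : SimpleGraph V) :
    ∃ w, IsMaxFracMatching G w := by
  have hcont : Continuous (edgeTotal (V := V)) := by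
    unfold edgeTotal
    exact continuous_finset_sum _ fun e _ => continuous_apply e
  have hvds : ∀ v : V, Continuous (fun w : Sym2 V → ℝ => vertexDegSum w v) := by
    intro v
    unfold vertexDegSum
    exact continuous_finset_sum _ fun e _ => continuous_apply e
  have hclosed : IsClosed {w : Sym2 V → ℝ | IsFracMatching G w} := by
    have heq : {w : Sym2 V → ℝ | IsFracMatching G w} =
        (⋂ e, {w : Sym2 V → ℝ | 0 ≤ w e}) ∩
        ((⋂ e, {w : Sym2 V → ℝ | e ∉ G.edgeSet → w e = 0}) ∩
         (⋂ v, {w : Sym2 V → ℝ | vertexDegSum w v ≤ 1})) := by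
      ext w
      simp only [IsFracMatching, Set.mem_setOf_eq, Set.mem_inter_iff, Set.mem_iInter]
    rw [heq]
    refine IsClosed.inter ?_ (IsClosed.inter ?_ ?_)
    · exact isClosed_iInter fun e => isClosed_le continuous_const (continuous_apply e)
    · refine isClosed_iInter fun e => ?_
      by_cases he : e ∈ G.edgeSet
      · simp only [he, not_true_eq_false, false_implies, Set.setOf_true]
        exact isClosed_univ
      · have : {w : Sym2 V → ℝ | e ∉ G.edgeSet → w e = 0} = {w | w e = 0} := by
          ext w; simp [he]
        rw [this]
        exact isClosed_eq (continuous_apply e) continuous_const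
    · exact isClosed_iInter fun v => isClosed_le (hvds v) continuous_const
  have hsub : {w : Sym2 V → ℝ | IsFracMatching G w} ⊆
      Set.pi Set.univ (fun _ : Sym2 V => Set.Icc (0:ℝ) 1) := by
    intro w hw e _
    exact ⟨hw.1 e, weight_le_one hw e⟩
  have hcomp : IsCompact {w : Sym2 V → ℝ | IsFracMatching G w} :=
    IsCompact.of_isClosed_subset (isCompact_univ_pi fun _ => isCompact_Icc) hclosed hsub
  have hne : {w : Sym2 V → ℝ | IsFracMatching G w}.Nonempty := by
    refine ⟨fun _ => 0, ⟨fun e => le_refl 0, fun e _ => rfl, fun v => ?_⟩⟩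
    simp [vertexDegSum]
  obtain ⟨w0, hw0, hmax⟩ := hcomp.exists_isMaxOn hne hcont.continuousOn
  exact ⟨w0, hw0, fun w' hw' => hmax hw'⟩

/-- In a maximum fractional matching, every edge has a saturated endpoint. -/
lemma max_saturated {w : Sym2 V → ℝ} (hm : IsMaxFracMatching G w) {a b : V}
    (hab : G.Adj a b) : vertexDegSum w a = 1 ∨ vertexDegSum w b = 1 := by
  by_contra h
  push_neg at h
  obtain ⟨ha, hb⟩ := h
  have hsa : vertexDegSum w a < 1 := lt_of_le_of_ne (hm.1.2.2 a) ha
  have hsb : vertexDegSum w b < 1 := lt_of_le_of_ne (hm.1.2.2 b) hb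
  set ε := min (1 - vertexDegSum w a) (1 - vertexDegSum w b) with hε
  have hε0 : 0 < ε := lt_min (by linarith) (by linarith)
  have hm2 : IsFracMatching G (fun e => w e + if e = s(a, b) then ε else 0) := by
    refine ⟨fun e => ?_, fun e he => ?_, fun x => ?_⟩
    · refine add_nonneg (hm.1.1 e) ?_
      split <;> [exact le_of_lt hε0; exact le_refl 0]
    · have : e ≠ s(a, b) := by
        intro heq; exact he (heq ▸ (G.mem_edgeSet (v := a) (w := b)).mpr hab)
      simp [hm.1.2.1 e he, this]
    · rw [vds_add, vds_single]
      by_cases hx : x ∈ s(a, b)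
      · rw [if_pos hx]
        rcases Sym2.mem_iff.mp hx with rfl | rfl
        · have : ε ≤ 1 - vertexDegSum w x := min_le_left _ _
          linarith
        · have : ε ≤ 1 - vertexDegSum w x := min_le_right _ _
          linarith
      · rw [if_neg hx]
        simpa using hm.1.2.2 x
  have hT : edgeTotal (fun e => w e + if e = s(a, b) then ε else 0) = edgeTotal w + ε := by
    rw [edgeTotal_add, edgeTotal_single]
  have := hm.2 _ hm2
  rw [hT] at this
  linarith

/-- The fractional König/Gallai lower bound for edge covers. -/
lemma cover_lower_bound {c w : Sym2 V → ℝ} (hc : IsFracEdgeCover G c)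
    (hw : IsMaxFracMatching G w) :
    (Fintype.card V : ℝ) ≤ edgeTotal c + edgeTotal w := by
  set S : V → ℝ := fun v => vertexDegSum c v with hS
  have hS1 : ∀ v, 1 ≤ S v := hc.2.2
  have hS0 : ∀ v, 0 < S v := fun v => lt_of_lt_of_le one_pos (hS1 v)
  set M : Sym2 V → ℝ := Sym2.lift ⟨fun a b => max (S a) (S b), fun a b => max_comm _ _⟩ with hM
  have hM1 : ∀ e, 1 ≤ M e := by
    intro e; induction e using Sym2.ind with
    | _ a b => exact le_trans (hS1 a) (le_max_left _ _)
  have hMS : ∀ (v : V) (e : Sym2 V), v ∈ e → S v ≤ M e := by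
    intro v e hv
    induction e using Sym2.ind with
    | _ a b =>
      rcases Sym2.mem_iff.mp hv with rfl | rfl
      · exact le_max_left _ _
      · exact le_max_right _ _
  set m : Sym2 V → ℝ := fun e => c e / M e with hm
  have hmmatch : IsFracMatching G m := by
    refine ⟨fun e => div_nonneg (hc.1 e) (le_trans zero_le_one (hM1 e)),
      fun e he => by simp [hm, hc.2.1 e he], fun v => ?_⟩
    have h1 : vertexDegSum m v ≤ ∑ e ∈ Finset.univ.filter (fun e : Sym2 V => v ∈ e), c e / S v := by
      refine Finset.sum_le_sum fun e he => ?_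
      have hv : v ∈ e := (Finset.mem_filter.mp he).2
      exact div_le_div_of_nonneg_left (hc.1 e) (hS0 v) (hMS v e hv)
    calc vertexDegSum m v ≤ _ := h1
      _ = S v / S v := by rw [← Finset.sum_div]; rfl
      _ = 1 := div_self (hS0 v).ne'
  have key : (Fintype.card V : ℝ) - edgeTotal c ≤ edgeTotal m := by
    have perEdge : ∀ e : Sym2 V,
        c e * ((∑ v ∈ Finset.univ.filter (fun v : V => v ∈ e), 1 / S v) - 1) ≤ m e := by
      intro e
      induction e using Sym2.ind with
      | _ a b =>
        by_cases hab : a = b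
        · subst hab
          have : c s(a, a) = 0 := hc.2.1 _ (diag_not_edge (by simp))
          simp [hm, this]
        · rw [filter_mem_sym2 hab, Finset.sum_pair hab]
          have hMab : M s(a, b) = max (S a) (S b) := Sym2.lift_mk _ _ _
          have hbb : 1 / S b ≤ 1 := by
            rw [div_le_one (hS0 b)]; exact hS1 b
          have haa : 1 / S a ≤ 1 := by
            rw [div_le_one (hS0 a)]; exact hS1 a
          rcases max_choice (S a) (S b) with h | h
          · have : (1 / S a + 1 / S b - 1) ≤ 1 / S a := by linarith
            calc c s(a, b) * (1 / S a + 1 / S b - 1)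
                ≤ c s(a, b) * (1 / S a) := mul_le_mul_of_nonneg_left this (hc.1 _)
              _ = c s(a, b) / S a := by ring
              _ = m s(a, b) := by rw [hm]; simp only [hMab, h]
          · have : (1 / S a + 1 / S b - 1) ≤ 1 / S b := by linarith
            calc c s(a, b) * (1 / S a + 1 / S b - 1)
                ≤ c s(a, b) * (1 / S b) := mul_le_mul_of_nonneg_left this (hc.1 _)
              _ = c s(a, b) / S b := by ring
              _ = m s(a, b) := by rw [hm]; simp only [hMab, h]
    have hsum : ∑ e : Sym2 V,
        c e * ((∑ v ∈ Finset.univ.filter (fun v : V => v ∈ e), 1 / S v) - 1)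
        = (Fintype.card V : ℝ) - edgeTotal c := by
      have expand : ∀ e : Sym2 V,
          c e * ((∑ v ∈ Finset.univ.filter (fun v : V => v ∈ e), 1 / S v) - 1)
          = (∑ v : V, if v ∈ e then c e / S v else 0) - c e := by
        intro e
        rw [← Finset.sum_filter]
        rw [mul_sub, mul_one, Finset.mul_sum]
        congr 1
        refine Finset.sum_congr rfl fun v _ => ?_
        ring
      simp_rw [expand]
      rw [Finset.sum_sub_distrib, Finset.sum_comm]
      have : ∀ v : V, ∑ e : Sym2 V, (if v ∈ e then c e / S v else 0) = 1 := by
        intro v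
        rw [← Finset.sum_filter, ← Finset.sum_div]
        exact div_self (hS0 v).ne'
      simp_rw [this]
      simp [edgeTotal]
    calc (Fintype.card V : ℝ) - edgeTotal c = _ := hsum.symm
      _ ≤ ∑ e : Sym2 V, m e := Finset.sum_le_sum fun e _ => perEdge e
      _ = edgeTotal m := rfl
  have := hw.2 m hmmatch
  linarith


lemma exists_max_matching_lt_one (G : SimpleGraph V) [Nonempty V]
    (hdeg1 : ∀ v : V, ∃ u : V, G.Adj v u)
    (hbad : ∀ e ∈ G.edgeSet, ¬ IsBadEdge G e) :
    ∃ w, IsMaxFracMatching G w ∧ ∀ e ∈ G.edgeSet, w e < 1 := by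
  classical
  obtain ⟨w0, hw0⟩ := exists_max_frac_matching G
  have hEne : G.edgeFinset.Nonempty := by
    obtain ⟨v⟩ := ‹Nonempty V›
    obtain ⟨u, hadj⟩ := hdeg1 v
    exact ⟨s(v, u), SimpleGraph.mem_edgeFinset.mpr hadj⟩
  have hch : ∀ e ∈ G.edgeFinset, ∃ we, IsMaxFracMatching G we ∧ we e < 1 := by
    intro e he
    have h := hbad e (SimpleGraph.mem_edgeFinset.mp he)
    rw [IsBadEdge] at h
    push_neg at h
    obtain ⟨we, hwe, hne⟩ := h
    exact ⟨we, hwe, lt_of_le_of_ne (weight_le_one hwe.1 e) hne⟩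
  choose! F hF1 hF2 using hch
  have hk : (0:ℝ) < (G.edgeFinset.card : ℝ) := by
    exact_mod_cast Finset.card_pos.mpr hEne
  refine ⟨fun f => (G.edgeFinset.card : ℝ)⁻¹ * ∑ e ∈ G.edgeFinset, F e f, ⟨⟨?_, ?_, ?_⟩, ?_⟩, ?_⟩
  · intro f
    exact mul_nonneg (inv_nonneg.mpr hk.le)
      (Finset.sum_nonneg fun e he => (hF1 e he).1.1 f)
  · intro f hf
    show ((G.edgeFinset.card : ℝ))⁻¹ * ∑ e ∈ G.edgeFinset, F e f = 0
    rw [Finset.sum_eq_zero fun e he => (hF1 e he).1.2.1 f hf, mul_zero]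
  · intro v
    rw [vds_smul _ (fun f => ∑ e ∈ G.edgeFinset, F e f) v,
      vds_sum G.edgeFinset (fun e => F e) v]
    have h1 : ∑ e ∈ G.edgeFinset, vertexDegSum (F e) v ≤ (G.edgeFinset.card : ℝ) := by
      calc ∑ e ∈ G.edgeFinset, vertexDegSum (F e) v
          ≤ ∑ _e ∈ G.edgeFinset, (1:ℝ) := Finset.sum_le_sum fun e he => (hF1 e he).1.2.2 v
        _ = (G.edgeFinset.card : ℝ) := by simp
    calc (G.edgeFinset.card : ℝ)⁻¹ * ∑ e ∈ G.edgeFinset, vertexDegSum (F e) v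
        ≤ (G.edgeFinset.card : ℝ)⁻¹ * (G.edgeFinset.card : ℝ) :=
          mul_le_mul_of_nonneg_left h1 (inv_nonneg.mpr hk.le)
      _ = 1 := inv_mul_cancel₀ hk.ne'
  · intro w2 hw2
    have heT : edgeTotal (fun f => (G.edgeFinset.card : ℝ)⁻¹ * ∑ e ∈ G.edgeFinset, F e f)
        = edgeTotal w0 := by
      rw [edgeTotal_smul _ (fun f => ∑ e ∈ G.edgeFinset, F e f),
        edgeTotal_sum G.edgeFinset (fun e => F e)]
      have : ∑ e ∈ G.edgeFinset, edgeTotal (F e)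
          = (G.edgeFinset.card : ℝ) * edgeTotal w0 := by
        rw [Finset.sum_congr rfl fun e he =>
          le_antisymm (hw0.2 _ (hF1 e he).1) ((hF1 e he).2 w0 hw0.1)]
        simp [Finset.sum_const, mul_comm]
      rw [this, ← mul_assoc, inv_mul_cancel₀ hk.ne', one_mul]
    rw [heT]
    exact hw0.2 w2 hw2
  · intro e he
    have heF : e ∈ G.edgeFinset := SimpleGraph.mem_edgeFinset.mpr he
    have hstrict : ∑ f ∈ G.edgeFinset, F f e < (G.edgeFinset.card : ℝ) := by
      have : ∑ f ∈ G.edgeFinset, F f e < ∑ _f ∈ G.edgeFinset, (1:ℝ) :=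
        Finset.sum_lt_sum (fun f hf => weight_le_one (hF1 f hf).1 e)
          ⟨e, heF, hF2 e heF⟩
      simpa using this
    calc (G.edgeFinset.card : ℝ)⁻¹ * ∑ f ∈ G.edgeFinset, F f e
        < (G.edgeFinset.card : ℝ)⁻¹ * (G.edgeFinset.card : ℝ) :=
          mul_lt_mul_of_pos_left hstrict (inv_pos.mpr hk)
      _ = 1 := inv_mul_cancel₀ hk.ne'

lemma build_cover (G : SimpleGraph V)
    (hdeg : ∀ v : V, ∃ u u' : V, u ≠ u' ∧ G.Adj v u ∧ G.Adj v u')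
    {w : Sym2 V → ℝ} (hw : IsMaxFracMatching G w) (hlt : ∀ e ∈ G.edgeSet, w e < 1) :
    ∃ w', IsMinFracEdgeCover G w' ∧ ∀ e ∈ G.edgeSet, w e ≤ w' e ∧ w' e < 1 := by
  classical
  choose u u' huu' hadj hadj' using hdeg
  set d : V → ℝ := fun v => 1 - vertexDegSum w v with hd
  have hd0 : ∀ v, 0 ≤ d v := by
    intro v; rw [hd]; have := hw.1.2.2 v; simp only []; linarith
  set A : Sym2 V → ℝ := fun e => ∑ v : V,
      ((if e = s(v, u v) then d v / 2 else 0) + (if e = s(v, u' v) then d v / 2 else 0)) with hA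
  have hite : ∀ (b : Prop) (inst : Decidable b) (v : V), 0 ≤ (@ite ℝ b inst (d v / 2) 0) := by
    intro b inst v
    split
    · exact div_nonneg (hd0 v) (by norm_num)
    · exact le_refl 0
  have hA0 : ∀ e, 0 ≤ A e := by
    intro e; rw [hA]
    exact Finset.sum_nonneg fun v _ => add_nonneg (hite _ _ v) (hite _ _ v)
  have hAoff : ∀ e, e ∉ G.edgeSet → A e = 0 := by
    intro e he
    rw [hA]
    refine Finset.sum_eq_zero fun v _ => ?_
    have h1 : e ≠ s(v, u v) := fun h => he (h ▸ (G.mem_edgeSet).mpr (hadj v))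
    have h2 : e ≠ s(v, u' v) := fun h => he (h ▸ (G.mem_edgeSet).mpr (hadj' v))
    simp [h1, h2]
  have hvdsA : ∀ x, vertexDegSum A x = ∑ v : V,
      ((if x ∈ s(v, u v) then d v / 2 else 0) + (if x ∈ s(v, u' v) then d v / 2 else 0)) := by
    intro x
    rw [hA, vds_sum Finset.univ
      (fun v e => ((if e = s(v, u v) then d v / 2 else 0) + (if e = s(v, u' v) then d v / 2 else 0))) x]
    refine Finset.sum_congr rfl fun v _ => ?_
    rw [vds_add (fun e => if e = s(v, u v) then d v / 2 else 0)
      (fun e => if e = s(v, u' v) then d v / 2 else 0) x, vds_single, vds_single]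
  have hTA : edgeTotal A = ∑ v : V, d v := by
    rw [hA, edgeTotal_sum Finset.univ
      (fun v e => ((if e = s(v, u v) then d v / 2 else 0) + (if e = s(v, u' v) then d v / 2 else 0)))]
    refine Finset.sum_congr rfl fun v _ => ?_
    rw [edgeTotal_add (fun e => if e = s(v, u v) then d v / 2 else 0)
      (fun e => if e = s(v, u' v) then d v / 2 else 0), edgeTotal_single, edgeTotal_single]
    ring
  have hdiagw : ∀ e : Sym2 V, e.IsDiag → w e = 0 := fun e h => hw.1.2.1 e (diag_not_edge h)
  have hsumd : ∑ v : V, d v = (Fintype.card V : ℝ) - 2 * edgeTotal w := by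
    rw [hd]
    simp only []
    rw [Finset.sum_sub_distrib, handshake hdiagw]
    simp
  have hTw' : edgeTotal (fun e => w e + A e) = (Fintype.card V : ℝ) - edgeTotal w := by
    rw [edgeTotal_add, hTA, hsumd]; ring
  refine ⟨fun e => w e + A e, ⟨⟨?_, ?_, ?_⟩, ?_⟩, ?_⟩
  · intro e; exact add_nonneg (hw.1.1 e) (hA0 e)
  · intro e he
    show w e + A e = 0
    rw [hw.1.2.1 e he, hAoff e he, add_zero]
  · intro x
    rw [vds_add, hvdsA]
    have hterm : d x ≤ ∑ v : V,
        ((if x ∈ s(v, u v) then d v / 2 else 0) + (if x ∈ s(v, u' v) then d v / 2 else 0)) := by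
      have hx1 : x ∈ s(x, u x) := Sym2.mem_mk_left _ _
      have hx2 : x ∈ s(x, u' x) := Sym2.mem_mk_left _ _
      have hval : ((if x ∈ s(x, u x) then d x / 2 else 0) + (if x ∈ s(x, u' x) then d x / 2 else 0)) = d x := by
        rw [if_pos hx1, if_pos hx2]; ring
      calc d x = _ := hval.symm
        _ ≤ ∑ v : V, ((if x ∈ s(v, u v) then d v / 2 else 0) + (if x ∈ s(v, u' v) then d v / 2 else 0)) :=
          Finset.single_le_sum (f := fun v : V =>
            ((if x ∈ s(v, u v) then d v / 2 else 0) + (if x ∈ s(v, u' v) then d v / 2 else 0)))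
          (fun v _ => add_nonneg (hite _ _ v) (hite _ _ v)) (Finset.mem_univ x)
    have hdx : d x = 1 - vertexDegSum w x := by rw [hd]
    linarith
  · intro c hc
    have := cover_lower_bound hc hw
    rw [hTw']
    linarith
  · intro e he
    refine ⟨le_add_of_nonneg_right (hA0 e), ?_⟩
    induction e using Sym2.ind with
    | _ a b =>
      have hab : G.Adj a b := (G.mem_edgeSet).mp he
      have hAe : A s(a, b) ≤ d a / 2 + d b / 2 := by
        have h2 : ∑ v ∈ Finset.univ.filter (fun v : V => v ∈ s(a, b)), d v / 2
            = d a / 2 + d b / 2 := by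
          rw [filter_mem_sym2 hab.ne, Finset.sum_pair hab.ne]
        rw [hA, ← h2, Finset.sum_filter]
        refine Finset.sum_le_sum fun v _ => ?_
        have hne2 : s(v, u v) ≠ s(v, u' v) := by
          intro hcontr
          rw [Sym2.eq_iff] at hcontr
          rcases hcontr with ⟨-, h⟩ | ⟨h1, h2⟩
          · exact huu' v h
          · exact (hadj v).ne' h2
        by_cases h1 : s(a, b) = s(v, u v) <;> by_cases h2' : s(a, b) = s(v, u' v)
        · exact absurd (h1.symm.trans h2') hne2
        · have hv : v ∈ s(a, b) := by rw [h1]; exact Sym2.mem_mk_left _ _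
          rw [if_pos h1, if_neg h2', if_pos hv, add_zero]
        · have hv : v ∈ s(a, b) := by rw [h2']; exact Sym2.mem_mk_left _ _
          rw [if_neg h1, if_pos h2', if_pos hv, zero_add]
        · rw [if_neg h1, if_neg h2', add_zero]
          exact hite _ _ v
      have hwa : w s(a, b) ≤ vertexDegSum w a := edge_le_vds hw.1.1 (Sym2.mem_mk_left _ _)
      have hwb : w s(a, b) ≤ vertexDegSum w b := edge_le_vds hw.1.1 (Sym2.mem_mk_right _ _)
      have hlt' : w s(a, b) < 1 := hlt _ he
      have hda : d a = 1 - vertexDegSum w a := by rw [hd]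
      have hdb : d b = 1 - vertexDegSum w b := by rw [hd]
      rcases max_saturated hw hab with h | h
      · have : d a = 0 := by rw [hda, h]; ring
        have hdble : d b ≤ 1 - w s(a, b) := by rw [hdb]; linarith
        show w s(a, b) + A s(a, b) < 1
        linarith
      · have : d b = 0 := by rw [hdb, h]; ring
        have hdale : d a ≤ 1 - w s(a, b) := by rw [hda]; linarith
        show w s(a, b) + A s(a, b) < 1
        linarith

end Helpers

/-- A graph with minimum degree at least 2 and no bad edges has a maximum fractional
matching and a minimum fractional edge cover with w_e ≤ w'_e < 1 on every edge. -/
theorem no_bad_edges_matching_and_cover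
    [Fintype V] [DecidableEq V] (G : SimpleGraph V)
    (hdeg : ∀ v : V, ∃ u u' : V, u ≠ u' ∧ G.Adj v u ∧ G.Adj v u')
    (hbad : ∀ e ∈ G.edgeSet, ¬ IsBadEdge G e) :
    ∃ (w w' : Sym2 V → ℝ), IsMaxFracMatching G w ∧ IsMinFracEdgeCover G w' ∧
      ∀ e ∈ G.edgeSet, w e ≤ w' e ∧ w' e < 1 := by
  rcases isEmpty_or_nonempty V with hV | hV
  · obtain ⟨w0, hw0⟩ := exists_max_frac_matching G
    haveI hSE : IsEmpty (Sym2 V) := by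
      constructor
      intro e
      induction e using Sym2.ind with
      | _ a b => exact hV.elim a
    refine ⟨w0, fun _ => 0, hw0,
      ⟨⟨fun e => le_refl 0, fun e _ => rfl, fun v => hV.elim v⟩, fun c _ => ?_⟩,
      fun e _ => (hSE.false e).elim⟩
    simp [edgeTotal]
  · have hdeg1 : ∀ v : V, ∃ u : V, G.Adj v u := by
      intro v
      obtain ⟨u, _, _, hadj, _⟩ := hdeg v
      exact ⟨u, hadj⟩
    obtain ⟨w, hwmax, hwlt⟩ := exists_max_matching_lt_one G hdeg1 hbad
    obtain ⟨w', hw'min, hw'e⟩ := build_cover G hdeg hwmax hwlt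
    exact ⟨w, w', hwmax, hw'min, fun e he => ⟨(hw'e e he).1, (hw'e e he).2⟩⟩
end

section
/- Define I_p(x) = x·log(x/p) + (1−x)·log((1−x)/(1−p)) for x ∈ [0,1] (with the limiting values at 0 and 1). Then for x ∈ [0,p], I_p(p − x) ≥ I_p(p + x). -/
/-- The relative entropy I_p(x) = x log(x/p) + (1-x) log((1-x)/(1-p)); with Lean's
conventions log 0 = 0 and 0 * log 0 = 0 this gives the correct limiting values at 0 and 1. -/
noncomputable def Ip (p x : ℝ) : ℝ :=
  x * Real.log (x / p) + (1 - x) * Real.log ((1 - x) / (1 - p))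

/-!
The function g(t) = I_p(p - t) - I_p(p + t) vanishes at t = 0 and is nondecreasing on [0, p]:
its derivative is g'(t) = log(1 - (t/(1-p))²) - log(1 - (t/p)²), which is nonnegative because
t/p ≥ t/(1-p) when p ≤ 1/2.
-/

open Real Set

lemma continuous_mul_log_div (q : ℝ) : Continuous fun x : ℝ => x * log (x / q) := by
  rcases eq_or_ne q 0 with rfl | hq
  · simpa using continuous_const
  · have h : (fun x : ℝ => x * log (x / q)) = fun x => q * (x / q * log (x / q)) := by
      funext x; field_simp
    rw [h]
    exact continuous_const.mul (continuous_mul_log.comp (continuous_id.div_const q))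

lemma hasDerivAt_mul_log_div {q x : ℝ} (hq : q ≠ 0) (hx : x ≠ 0) :
    HasDerivAt (fun y : ℝ => y * log (y / q)) (log (x / q) + 1) x :=
  ((hasDerivAt_id' x).fun_mul
    (((hasDerivAt_id' x).div_const q).log (div_ne_zero hx hq))).congr_deriv (by field_simp)

@[fun_prop]
lemma continuous_Ip (p : ℝ) : Continuous (Ip p) :=
  (continuous_mul_log_div p).add
    ((continuous_mul_log_div (1 - p)).comp (continuous_const.sub continuous_id))

lemma hasDerivAt_Ip {p x : ℝ} (hp0 : p ≠ 0) (hp1 : p ≠ 1) (hx0 : x ≠ 0) (hx1 : x ≠ 1) :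
    HasDerivAt (Ip p) (log (x / p) - log ((1 - x) / (1 - p))) x :=
  ((hasDerivAt_mul_log_div hp0 hx0).fun_add ((hasDerivAt_mul_log_div (sub_ne_zero.2 hp1.symm)
    (sub_ne_zero.2 hx1.symm)).comp x ((hasDerivAt_id' x).const_sub 1))).congr_deriv (by ring)

lemma log_sub_div_add_log_add_div_le {a b t : ℝ} (ha : 0 < a) (hab : a ≤ b) (ht : 0 ≤ t)
    (hta : t < a) :
    log ((a - t) / a) + log ((a + t) / a) ≤ log ((b - t) / b) + log ((b + t) / b) := by
  have hb : 0 < b := ha.trans_le hab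
  have hsq : ∀ c : ℝ, 0 < c → (c - t) / c * ((c + t) / c) = 1 - (t / c) ^ 2 := by
    intro c hc
    field_simp
    ring
  have hat : 0 < a - t := by linarith
  have hbt : 0 < b - t := by linarith
  rw [← log_mul (by positivity) (by positivity), ← log_mul (by positivity) (by positivity)]
  apply log_le_log (by positivity)
  rw [hsq a ha, hsq b hb]
  gcongr

lemma hasDerivAt_Ip_sub_sub_Ip_add {p t : ℝ} (ht0 : 0 < t) (htp : t < p) (hpt : p + t < 1) :
    HasDerivAt (fun s => Ip p (p - s) - Ip p (p + s))
      ((log ((1 - p - t) / (1 - p)) + log ((1 - p + t) / (1 - p)))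
        - (log ((p - t) / p) + log ((p + t) / p))) t := by
  have hp0 : p ≠ 0 := by linarith
  have hp1 : p ≠ 1 := by linarith
  have hminus := (hasDerivAt_Ip hp0 hp1 (x := p - t) (by linarith) (by linarith)).comp t
    ((hasDerivAt_id' t).const_sub p)
  have hplus := (hasDerivAt_Ip hp0 hp1 (x := p + t) (by linarith) (by linarith)).comp t
    ((hasDerivAt_id' t).const_add p)
  refine (hminus.fun_sub hplus).congr_deriv ?_
  rw [show 1 - (p - t) = 1 - p + t by ring, show 1 - (p + t) = 1 - p - t by ring]
  ring

lemma monotoneOn_Ip_sub_sub_Ip_add {p : ℝ} (hp : 0 < p) (hp' : p ≤ 1 / 2) :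
    MonotoneOn (fun s => Ip p (p - s) - Ip p (p + s)) (Icc 0 p) := by
  refine monotoneOn_of_hasDerivWithinAt_nonneg (convex_Icc 0 p) (by fun_prop)
    (f' := fun t => (log ((1 - p - t) / (1 - p)) + log ((1 - p + t) / (1 - p)))
      - (log ((p - t) / p) + log ((p + t) / p))) ?_ ?_
  all_goals intro t ht; rw [interior_Icc] at ht; obtain ⟨ht0, htp⟩ := ht
  · exact (hasDerivAt_Ip_sub_sub_Ip_add ht0 htp (by linarith)).hasDerivWithinAt
  · have key := log_sub_div_add_log_add_div_le (b := 1 - p) hp (by linarith) ht0.le htp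
    linarith

/-- For 0 < p < 1/2 and x ∈ [0, p], I_p(p - x) ≥ I_p(p + x). -/
theorem Ip_sub_ge_Ip_add (p : ℝ) (hp : 0 < p) (hp' : p < 1 / 2)
    (x : ℝ) (hx : x ∈ Set.Icc (0 : ℝ) p) :
    Ip p (p + x) ≤ Ip p (p - x) := by
  simpa using monotoneOn_Ip_sub_sub_Ip_add hp hp'.le (left_mem_Icc.2 hp.le) hx hx.1
end

section
/- For every constant c > 0 there exists ε > 0 such that: if p → 0 and x = x(p) ∈ [−p, 1−p] satisfies |x| ≥ p^{1+ε}, then I_p(p + x) ≥ (1 − o(1))·|x|^{1+c}·log(1/p). -/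
open Filter
open Real

/-- Key scalar entropy bound: a log(a/b) - a + b ≥ (√a - √b)². -/
lemma sq_sqrt_sub_le' {a b : ℝ} (ha : 0 ≤ a) (hb : 0 < b) :
    (Real.sqrt a - Real.sqrt b) ^ 2 ≤ a * Real.log (a / b) - a + b := by
  rcases eq_or_lt_of_le ha with h | hapos
  · simp [← h, Real.sqrt_zero, Real.sq_sqrt hb.le]
  · have hsa : 0 < Real.sqrt a := Real.sqrt_pos.mpr hapos
    have hsb : 0 < Real.sqrt b := Real.sqrt_pos.mpr hb
    have ea : Real.sqrt a * Real.sqrt a = a := Real.mul_self_sqrt ha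
    have eb : Real.sqrt b * Real.sqrt b = b := Real.mul_self_sqrt hb.le
    have h1 : Real.log (a / b) = 2 * Real.log (Real.sqrt a / Real.sqrt b) := by
      rw [Real.log_div hapos.ne' hb.ne', Real.log_div hsa.ne' hsb.ne',
        Real.log_sqrt ha, Real.log_sqrt hb.le]
      ring
    have hlog : 1 - (Real.sqrt a / Real.sqrt b)⁻¹ ≤ Real.log (Real.sqrt a / Real.sqrt b) :=
      Real.one_sub_inv_le_log_of_pos (by positivity)
    have hinv : (Real.sqrt a / Real.sqrt b)⁻¹ = Real.sqrt b / Real.sqrt a := by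
      rw [inv_div]
    rw [hinv] at hlog
    have h2 : a * (2 * (1 - Real.sqrt b / Real.sqrt a)) ≤ a * (2 * Real.log (Real.sqrt a / Real.sqrt b)) := by
      have := mul_le_mul_of_nonneg_left hlog (le_of_lt hapos)
      nlinarith
    have h3 : a * (2 * (1 - Real.sqrt b / Real.sqrt a)) = 2 * a - 2 * Real.sqrt a * Real.sqrt b := by
      field_simp
      nlinarith [ea]
    rw [h1]
    nlinarith [h2, h3, ea, eb]

/-- Quadratic lower bound on relative entropy. -/
lemma Ip_ge_sq' {p y : ℝ} (hp : 0 < p) (hp1 : p < 1) (hy0 : 0 ≤ y) (hy1 : y ≤ 1) :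
    (Real.sqrt y - Real.sqrt p) ^ 2 ≤ Ip p y := by
  have h1 := sq_sqrt_sub_le' hy0 hp
  have h2 := sq_sqrt_sub_le' (by linarith : (0:ℝ) ≤ 1 - y) (by linarith : (0:ℝ) < 1 - p)
  have h2' : (0:ℝ) ≤ (1 - y) * Real.log ((1 - y) / (1 - p)) - (1 - y) + (1 - p) := by
    nlinarith [sq_nonneg (Real.sqrt (1 - y) - Real.sqrt (1 - p))]
  unfold Ip
  nlinarith

/-- Linear-log lower bound for large positive deviations. -/
lemma Ip_ge_log' {p x : ℝ} (hp : 0 < p) (hpx : p ≤ x) (hx1 : p + x ≤ 1) :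
    x * Real.log (x / p) - x ≤ Ip p (p + x) := by
  have hx : 0 < x := lt_of_lt_of_le hp hpx
  have hp1 : p < 1 := by linarith
  have h2 := sq_sqrt_sub_le' (by linarith : (0:ℝ) ≤ 1 - (p + x)) (by linarith : (0:ℝ) < 1 - p)
  have h2' : -x ≤ (1 - (p + x)) * Real.log ((1 - (p + x)) / (1 - p)) := by
    nlinarith [sq_nonneg (Real.sqrt (1 - (p + x)) - Real.sqrt (1 - p))]
  have hlogpos : 0 ≤ Real.log (x / p) :=
    Real.log_nonneg ((one_le_div hp).mpr hpx)
  have hmono : x * Real.log (x / p) ≤ (p + x) * Real.log ((p + x) / p) := by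
    have l1 : Real.log (x / p) ≤ Real.log ((p + x) / p) :=
      Real.log_le_log (by positivity) (by apply div_le_div_of_nonneg_right ?_ hp.le; linarith)
    calc x * Real.log (x / p) ≤ (p + x) * Real.log (x / p) := by nlinarith
      _ ≤ (p + x) * Real.log ((p + x) / p) := by nlinarith
  unfold Ip
  nlinarith

set_option maxHeartbeats 2000000

/-- For every c > 0 there is ε > 0 such that whenever |x(p)| ≥ p^{1+ε} (and p + x ∈ [0,1]),
I_p(p + x) ≥ (1 - o(1)) |x|^{1+c} log(1/p) as p → 0. -/
theorem Ip_moment_lower_bound (c : ℝ) (hc : 0 < c) :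
    ∃ ε : ℝ, 0 < ε ∧ ∀ x : ℝ → ℝ,
      (∀ᶠ p in nhdsWithin (0 : ℝ) (Set.Ioi 0),
        x p ∈ Set.Icc (-p) (1 - p) ∧ p ^ (1 + ε) ≤ |x p|) →
      ∀ δ : ℝ, 0 < δ →
        ∀ᶠ p in nhdsWithin (0 : ℝ) (Set.Ioi 0),
          (1 - δ) * |x p| ^ (1 + c) * Real.log (1 / p) ≤ Ip p (p + x p) := by
  refine ⟨c / 2, half_pos hc, ?_⟩
  intro x hx δ hδ
  have E1 : ∀ᶠ p in nhdsWithin (0 : ℝ) (Set.Ioi 0), p ∈ Set.Ioo (0:ℝ) (1/2) :=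
    eventually_of_mem (Ioo_mem_nhdsGT_of_mem (by norm_num)) (fun p hp => hp)
  have E2 : ∀ᶠ p in nhdsWithin (0 : ℝ) (Set.Ioi 0),
      -(1/8 : ℝ) < Real.log p * p ^ (c/2) :=
    (tendsto_log_mul_rpow_nhdsGT_zero (half_pos hc)).eventually
      (eventually_gt_nhds (by norm_num))
  have E3 : ∀ᶠ p in nhdsWithin (0 : ℝ) (Set.Ioi 0),
      -(1/8 : ℝ) < Real.log p * p ^ (δ * c / 2) :=
    (tendsto_log_mul_rpow_nhdsGT_zero (by positivity)).eventually
      (eventually_gt_nhds (by norm_num))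
  have E4 : ∀ᶠ p in nhdsWithin (0 : ℝ) (Set.Ioi 0), Real.log p ≤ -(2/δ) :=
    Real.tendsto_log_nhdsGT_zero.eventually (eventually_le_atBot _)
  filter_upwards [hx, E1, E2, E3, E4] with p hxp hp12 h2 h3 h4
  obtain ⟨⟨hxlo, hxhi⟩, hxl⟩ := hxp
  obtain ⟨hp, hp2⟩ := hp12
  have hp1 : p < 1 := by linarith
  have hL : 0 < -Real.log p := by have := Real.log_neg hp hp1; linarith
  rw [one_div, Real.log_inv]
  set L := -Real.log p with hLdef
  set X := |x p| with hXdef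
  have hX : 0 < X := lt_of_lt_of_le (Real.rpow_pos_of_pos hp _) hxl
  have hXabs : x p ≤ X ∧ -X ≤ x p := ⟨le_abs_self _, neg_abs_le _⟩
  have hy0 : 0 ≤ p + x p := by linarith
  have hy1 : p + x p ≤ 1 := by linarith
  have hIp0 : 0 ≤ Ip p (p + x p) := by
    have h := Ip_ge_sq' hp hp1 hy0 hy1
    nlinarith [sq_nonneg (Real.sqrt (p + x p) - Real.sqrt p)]
  by_cases hδ1 : 1 ≤ δ
  · have hb : (1 - δ) * (X ^ (1 + c) * L) ≤ 0 :=
      mul_nonpos_of_nonpos_of_nonneg (by linarith)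
        (mul_nonneg (Real.rpow_nonneg (abs_nonneg _) _) hL.le)
    nlinarith
  push_neg at hδ1
  have hXc : X ^ (1 + c) = X * X ^ c := by rw [Real.rpow_add hX, Real.rpow_one]
  have hXle1 : X ≤ 1 := by
    rcases abs_cases (x p) with ⟨h, _⟩ | ⟨h, _⟩ <;> rw [hXdef, h] <;> linarith
  have hXcnn : (0:ℝ) ≤ X ^ c := Real.rpow_nonneg (abs_nonneg _) _
  by_cases hcase : X ≤ p ^ (δ/2)
  · -- quadratic regime
    have hB := Ip_ge_sq' hp hp1 hy0 hy1
    have ey : Real.sqrt (p + x p) * Real.sqrt (p + x p) = p + x p := Real.mul_self_sqrt hy0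
    have ep : Real.sqrt p * Real.sqrt p = p := Real.mul_self_sqrt hp.le
    have epx : Real.sqrt (p + X) * Real.sqrt (p + X) = p + X :=
      Real.mul_self_sqrt (by linarith)
    have hsumle : Real.sqrt (p + x p) + Real.sqrt p ≤ 2 * Real.sqrt (p + X) := by
      have l1 : Real.sqrt (p + x p) ≤ Real.sqrt (p + X) := Real.sqrt_le_sqrt (by linarith)
      have l2 : Real.sqrt p ≤ Real.sqrt (p + X) := Real.sqrt_le_sqrt (by linarith)
      linarith
    have hquad : X ^ 2 / (4 * (p + X)) ≤ Ip p (p + x p) := by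
      have e1 : (Real.sqrt (p + x p) - Real.sqrt p) ^ 2 *
          (Real.sqrt (p + x p) + Real.sqrt p) ^ 2 = (x p) ^ 2 := by
        have e : (Real.sqrt (p + x p) - Real.sqrt p) ^ 2 *
            (Real.sqrt (p + x p) + Real.sqrt p) ^ 2 =
            (Real.sqrt (p + x p) * Real.sqrt (p + x p) -
              Real.sqrt p * Real.sqrt p) ^ 2 := by ring
        rw [e, ey, ep]; ring
      have e2 : X ^ 2 = (x p) ^ 2 := sq_abs _
      have hsumsq : (Real.sqrt (p + x p) + Real.sqrt p) ^ 2 ≤ 4 * (p + X) := by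
        nlinarith [Real.sqrt_nonneg (p + x p), Real.sqrt_nonneg p, Real.sqrt_nonneg (p + X)]
      have key : X ^ 2 ≤ (Real.sqrt (p + x p) - Real.sqrt p) ^ 2 * (4 * (p + X)) := by
        nlinarith [sq_nonneg (Real.sqrt (p + x p) - Real.sqrt p)]
      have hpos : 0 < 4 * (p + X) := by linarith
      calc X ^ 2 / (4 * (p + X)) ≤ (Real.sqrt (p + x p) - Real.sqrt p) ^ 2 :=
            (div_le_iff₀ hpos).mpr key
        _ ≤ Ip p (p + x p) := hB
    have hgoal : (1 - δ) * X ^ (1 + c) * L ≤ X ^ 2 / (4 * (p + X)) := by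
      by_cases hXp : X ≤ p
      · have hXcle : X ^ c ≤ p ^ c := Real.rpow_le_rpow (abs_nonneg _) hXp hc.le
        have hpc : p ^ c = p ^ (c/2) * p ^ (c/2) := by
          rw [← Real.rpow_add hp]; norm_num
        have hpch : 0 < p ^ (c/2) := Real.rpow_pos_of_pos hp _
        have h2' : p ^ (c/2) * L ≤ 1/8 := by rw [hLdef]; nlinarith
        have hXcL : X ^ c * L ≤ p ^ (c/2) / 8 := by
          have s1 : X ^ c * L ≤ p ^ c * L := mul_le_mul_of_nonneg_right hXcle hL.le
          have s2 : p ^ c * L = p ^ (c/2) * (p ^ (c/2) * L) := by rw [hpc]; ring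
          nlinarith
        have hXlow : p * p ^ (c/2) ≤ X := by
          have heq : p ^ (1 + c/2) = p * p ^ (c/2) := by
            rw [Real.rpow_add hp, Real.rpow_one]
          linarith [hxl, heq ▸ hxl]
        have hnn : 0 ≤ X * X ^ c * L := by positivity
        have step1 : (1 - δ) * (X * X ^ c) * L ≤ X * (X ^ c * L) := by
          nlinarith [mul_nonneg hδ.le hnn]
        have step3 : X * (X ^ c * L) ≤ X * (p ^ (c/2) / 8) :=
          mul_le_mul_of_nonneg_left hXcL hX.le
        have hbd2 : X * (p ^ (c/2) / 8) ≤ X ^ 2 / (4 * (p + X)) := by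
          rw [le_div_iff₀ (by linarith : (0:ℝ) < 4 * (p + X))]
          nlinarith [mul_le_mul_of_nonneg_right
              (mul_le_mul_of_nonneg_left hXp hpch.le) hX.le,
            mul_le_mul_of_nonneg_right hXlow hX.le]
        rw [hXc]; exact le_trans (le_trans step1 step3) hbd2
      · push_neg at hXp
        have hXcle : X ^ c ≤ p ^ (δ * c / 2) := by
          have s1 : X ^ c ≤ (p ^ (δ/2)) ^ c :=
            Real.rpow_le_rpow (abs_nonneg _) hcase hc.le
          have s2 : (p ^ (δ/2)) ^ c = p ^ (δ * c / 2) := by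
            rw [← Real.rpow_mul hp.le]; ring_nf
          linarith [s2 ▸ s1]
        have h3' : p ^ (δ * c / 2) * L ≤ 1/8 := by rw [hLdef]; nlinarith
        have hXcL : X ^ c * L ≤ 1/8 := by
          nlinarith [mul_le_mul_of_nonneg_right hXcle hL.le]
        have hnn : 0 ≤ X * X ^ c * L := by positivity
        have step1 : (1 - δ) * (X * X ^ c) * L ≤ X * (X ^ c * L) := by
          nlinarith [mul_nonneg hδ.le hnn]
        have step3 : X * (X ^ c * L) ≤ X * (1/8) :=
          mul_le_mul_of_nonneg_left hXcL hX.le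
        have hbd2 : X * (1/8) ≤ X ^ 2 / (4 * (p + X)) := by
          rw [le_div_iff₀ (by linarith : (0:ℝ) < 4 * (p + X))]
          have hh : X * p ≤ X * X := mul_le_mul_of_nonneg_left hXp.le hX.le
          nlinarith [hh]
        rw [hXc]; exact le_trans (le_trans step1 step3) hbd2
    exact le_trans hgoal hquad
  · push_neg at hcase
    have hpow_ge : p ≤ p ^ (δ/2) := by
      have h := Real.rpow_le_rpow_of_exponent_ge hp hp1.le
        (by linarith : δ/2 ≤ (1:ℝ))
      rwa [Real.rpow_one] at h
    have hxpos : 0 < x p := by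
      by_contra h
      push_neg at h
      have : X = -(x p) := abs_of_nonpos h
      have : X ≤ p := by rw [this]; linarith
      linarith
    have hXeq : X = x p := abs_of_pos hxpos
    have hpx : p ≤ x p := by
      have := hcase; rw [hXeq] at this; linarith
    have hC := Ip_ge_log' hp hpx (by linarith)
    have hlog : (1 - δ/2) * L ≤ Real.log (x p / p) := by
      rw [Real.log_div (by positivity) hp.ne']
      have l1 : Real.log (p ^ (δ/2)) ≤ Real.log (x p) :=
        Real.log_le_log (Real.rpow_pos_of_pos hp _) (by rw [← hXeq]; exact hcase.le)
      rw [Real.log_rpow hp] at l1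
      rw [hLdef]; linarith
    have h4' : 1 ≤ δ/2 * L := by
      have hLg : 2/δ ≤ L := by rw [hLdef]; linarith
      have e : (1:ℝ) = δ/2 * (2/δ) := by field_simp
      calc (1:ℝ) = δ/2 * (2/δ) := e
        _ ≤ δ/2 * L := mul_le_mul_of_nonneg_left hLg (by positivity)
    have hIp : x p * ((1 - δ) * L) ≤ Ip p (p + x p) := by
      have e1 : x p * ((1 - δ/2) * L - 1) ≤ x p * (Real.log (x p / p) - 1) :=
        mul_le_mul_of_nonneg_left (by linarith) hxpos.le
      have e0 : x p * ((1 - δ) * L) ≤ x p * ((1 - δ/2) * L - 1) :=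
        mul_le_mul_of_nonneg_left (by nlinarith) hxpos.le
      nlinarith
    have hxc : X ^ (1 + c) ≤ X := by
      have h := Real.rpow_le_rpow_of_exponent_ge hX hXle1 (by linarith : (1:ℝ) ≤ 1 + c)
      rwa [Real.rpow_one] at h
    have final : (1 - δ) * X ^ (1 + c) * L ≤ (1 - δ) * X * L := by
      nlinarith [mul_le_mul_of_nonneg_left (mul_le_mul_of_nonneg_right hxc hL.le)
        (by linarith : (0:ℝ) ≤ 1 - δ)]
    have e : (1 - δ) * X * L = x p * ((1 - δ) * L) := by rw [hXeq]; ring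
    linarith
end

section
/- Let p → 0, x = x(p) ∈ [−p, 1−p], and ε = ε(p) ∈ (0, 1]. If |x| ≥ ε·p, then I_p(p + x) = Ω(ε·|x|). -/
open Real Set InformationTheory

lemma Ip_eq_klFun {p : ℝ} (hp₀ : p ≠ 0) (hp₁ : p ≠ 1) (q : ℝ) :
    Ip p q = p * klFun (q / p) + (1 - p) * klFun ((1 - q) / (1 - p)) := by
  have hp₁' : 1 - p ≠ 0 := sub_ne_zero.2 hp₁.symm
  simp only [Ip, klFun_apply]
  field_simp
  ring

lemma mul_klFun_div_le_Ip {p q : ℝ} (hp₀ : 0 < p) (hp₁ : p < 1) (hq : q ≤ 1) :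
    p * klFun (q / p) ≤ Ip p q := by
  rw [Ip_eq_klFun hp₀.ne' hp₁.ne]
  have : 0 ≤ (1 - p) * klFun ((1 - q) / (1 - p)) :=
    mul_nonneg (by linarith) (klFun_nonneg (div_nonneg (by linarith) (by linarith)))
  linarith

lemma sq_sub_one_div_two_le_klFun {t : ℝ} (ht₀ : 0 ≤ t) (ht₁ : t ≤ 1) :
    (t - 1) ^ 2 / 2 ≤ klFun t := by
  have hg : AntitoneOn (fun t ↦ klFun t - (t - 1) ^ 2 / 2) (Icc 0 1) := by
    refine antitoneOn_of_hasDerivWithinAt_nonpos (f' := fun t ↦ log t - (t - 1))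
      (convex_Icc 0 1) (by fun_prop) (fun s hs ↦ ?_) (fun s hs ↦ ?_)
    all_goals rw [interior_Icc] at hs
    · exact ((hasDerivAt_klFun hs.1.ne').sub ((((hasDerivAt_id' s).sub_const 1).pow 2).div_const
        2)).congr_deriv (by ring) |>.hasDerivWithinAt
    · linarith [log_le_sub_one_of_pos hs.1]
  simpa [klFun_one] using hg ⟨ht₀, ht₁⟩ ⟨zero_le_one, le_rfl⟩ ht₁

lemma sq_sub_one_div_two_mul_le_klFun {t : ℝ} (ht : 1 ≤ t) :
    (t - 1) ^ 2 / (2 * t) ≤ klFun t := by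
  have hg : MonotoneOn (fun t ↦ klFun t - (t - 1) ^ 2 / (2 * t)) (Ici 1) := by
    refine monotoneOn_of_hasDerivWithinAt_nonneg (f' := fun t ↦ log t - (1 - (t ^ 2)⁻¹) / 2)
      (convex_Ici 1) ?_ (fun s hs ↦ ?_) (fun s hs ↦ ?_)
    · refine continuous_klFun.continuousOn.sub <|
        ContinuousOn.div (by fun_prop) (by fun_prop) fun s (hs : 1 ≤ s) ↦ ?_
      have : 0 < s := zero_lt_one.trans_le hs
      positivity
    all_goals
      rw [interior_Ici] at hs
      have hs₁ : (1 : ℝ) < s := hs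
      have hs₀ : 0 < s := zero_lt_one.trans hs₁
    · exact ((hasDerivAt_klFun hs₀.ne').sub ((((hasDerivAt_id' s).sub_const 1).pow 2).div
        ((hasDerivAt_id' s).const_mul 2) (by positivity))).congr_deriv
        (by simp only [Pi.pow_apply]; field_simp; ring) |>.hasDerivWithinAt
    · have hlog := one_sub_inv_le_log_of_pos hs₀
      have hinv : s⁻¹ ≤ 1 := inv_le_one_of_one_le₀ hs₁.le
      have : (1 - (s ^ 2)⁻¹) / 2 ≤ 1 - s⁻¹ := by
        rw [pow_two, mul_inv]
        nlinarith [inv_nonneg.2 hs₀.le]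
      linarith
  simpa [klFun_one] using hg (mem_Ici.2 le_rfl) ht ht

lemma sq_sub_one_div_two_mul_max_le_klFun {t : ℝ} (ht : 0 ≤ t) :
    (t - 1) ^ 2 / (2 * max 1 t) ≤ klFun t := by
  rcases le_total t 1 with h | h
  · simpa [max_eq_left h] using sq_sub_one_div_two_le_klFun ht h
  · simpa [max_eq_right h] using sq_sub_one_div_two_mul_le_klFun h

lemma sq_sub_div_two_mul_max_le_Ip {p q : ℝ} (hp₀ : 0 < p) (hp₁ : p < 1) (hq₀ : 0 ≤ q)
    (hq₁ : q ≤ 1) : (q - p) ^ 2 / (2 * max p q) ≤ Ip p q :=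
  calc (q - p) ^ 2 / (2 * max p q) = p * ((q / p - 1) ^ 2 / (2 * max 1 (q / p))) := by
        have hmax : max p q = p * max 1 (q / p) := by
          rw [mul_max_of_nonneg _ _ hp₀.le, mul_one, mul_div_cancel₀ _ hp₀.ne']
        rw [hmax]
        field_simp
    _ ≤ p * klFun (q / p) :=
        mul_le_mul_of_nonneg_left (sq_sub_one_div_two_mul_max_le_klFun (by positivity)) hp₀.le
    _ ≤ Ip p q := mul_klFun_div_le_Ip hp₀ hp₁ hq₁

/-- Uniformly for small p, x ∈ [-p, 1-p] and ε ∈ (0,1] with |x| ≥ εp, one has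
I_p(p + x) = Ω(ε |x|). -/
theorem Ip_first_moment_lower_bound :
    ∃ C : ℝ, 0 < C ∧ ∃ p₀ : ℝ, 0 < p₀ ∧
      ∀ p : ℝ, 0 < p → p < p₀ →
        ∀ x : ℝ, x ∈ Set.Icc (-p) (1 - p) →
          ∀ ε : ℝ, 0 < ε → ε ≤ 1 → ε * p ≤ |x| →
            C * (ε * |x|) ≤ Ip p (p + x) := by
  refine ⟨1 / 4, by norm_num, 1, one_pos, fun p hp₀ hp₁ x ⟨hx₀, hx₁⟩ ε hε₀ hε₁ hεx ↦ ?_⟩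
  have hIp := sq_sub_div_two_mul_max_le_Ip hp₀ hp₁ (q := p + x) (by linarith) (by linarith)
  rw [add_sub_cancel_left, ← sq_abs] at hIp
  have hmax : max p (p + x) ≤ p + |x| :=
    max_le (by linarith [abs_nonneg x]) (by linarith [le_abs_self x])
  have hx : 0 < |x| := lt_of_lt_of_le (by positivity) hεx
  refine le_trans ?_ hIp
  rw [le_div_iff₀ (by positivity)]
  nlinarith [mul_le_mul_of_nonneg_left hmax hε₀.le]
end
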